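/- arXiv:2601.05588 — 2 statements merged into one kernel-verified Lean document; each statement's English description precedes it below -/
import Mathlib

section
/- For any k ≥ 2 points d₁, …, d_k in ℝⁿ, the number of permutations π of {1, …, k} for which there exists a point q ∈ ℝⁿ with ‖q − d_{π(1)}‖₂ < ‖q − d_{π(2)}‖₂ < ⋯ < ‖q − d_{π(k)}‖₂ is at most k^{2n}. -/
/-!
A distance permutation is determined by the signs of the functionals
`q ↦ ‖q - d j‖² - ‖q - d i‖²`, `i ≠ j`, which are affine in `q`; so the realized permutations are
at most the cells of an arrangement of `m = k² - k` hyperplanes in `ℝⁿ`. Adding a hyperplane to an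
arrangement splits only the cells it crosses, and these are cells of the arrangement induced on
the hyperplane, one dimension lower. By induction an arrangement of `m` hyperplanes in dimension
`e` has at most `(m + 1)ᵉ` cells, and `(k² - k + 1)ⁿ ≤ k²ⁿ`.
-/

open Finset Module

section SignPatterns

variable {𝕜 V P ι : Type*} [Field 𝕜] [AddCommGroup V] [Module 𝕜 V] [AddTorsor V P]

lemma finrank_direction_inf_comap_lt [FiniteDimensional 𝕜 V] (A : AffineSubspace 𝕜 P)
    (g : P →ᵃ[𝕜] 𝕜) {x z : P} (hx : x ∈ A) (hgx : g x ≠ 0) (hz : z ∈ A) (hgz : g z = 0) :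
    finrank 𝕜 (A ⊓ (affineSpan 𝕜 {0}).comap g).direction < finrank 𝕜 A.direction := by
  have hlt : A ⊓ (affineSpan 𝕜 {0}).comap g < A := by
    refine SetLike.lt_iff_le_and_exists.2 ⟨inf_le_left, x, hx, fun h => hgx ?_⟩
    simpa [AffineSubspace.mem_comap] using h.2
  have hz' : z ∈ A ⊓ (affineSpan 𝕜 {0}).comap g := ⟨hz, by simp [hgz]⟩
  exact Submodule.finrank_lt_finrank_of_lt (AffineSubspace.direction_lt_of_nonempty hlt ⟨z, hz'⟩)

variable [LinearOrder 𝕜]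

/-- The cells of the arrangement of hyperplanes `f j = 0`, `j ∈ s`, that meet `A`, each recorded
by the set of functionals positive on it. -/
def signPatterns (f : ι → P →ᵃ[𝕜] 𝕜) (s : Finset ι) (A : Set P) : Set (Finset ι) :=
  (fun x => {j ∈ s | 0 < f j x}) '' {x ∈ A | ∀ j ∈ s, f j x ≠ 0}

lemma lineMap_ne_zero_and_pos_iff [IsStrictOrderedRing 𝕜] {u v t : 𝕜} (hu : u ≠ 0) (hv : v ≠ 0)
    (huv : 0 < u ↔ 0 < v) (ht : t ∈ Set.Icc 0 1) :
    AffineMap.lineMap u v t ≠ 0 ∧ (0 < AffineMap.lineMap u v t ↔ 0 < u) := by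
  rcases hu.lt_or_gt with hu | hu
  · have hv : v < 0 := lt_of_le_of_ne (not_lt.1 (huv.not.1 hu.not_gt)) hv
    have h : AffineMap.lineMap u v t < 0 := (convex_Iio 0).lineMap_mem hu hv ht
    exact ⟨h.ne, iff_of_false h.not_gt hu.not_gt⟩
  · have h : 0 < AffineMap.lineMap u v t := (convex_Ioi 0).lineMap_mem hu (huv.1 hu) ht
    exact ⟨h.ne', iff_of_true h hu⟩

variable (f : ι → P →ᵃ[𝕜] 𝕜)

lemma signPatterns_finite (s : Finset ι) (A : Set P) : (signPatterns f s A).Finite :=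
  s.powerset.finite_toSet.subset <| by
    rintro _ ⟨x, -, rfl⟩
    exact mem_powerset.2 (filter_subset _ _)

lemma signPatterns_mono (s : Finset ι) {A B : Set P} (h : A ⊆ B) :
    signPatterns f s A ⊆ signPatterns f s B :=
  Set.image_mono fun _ hx => ⟨h hx.1, hx.2⟩

lemma signPatterns_empty_subset (A : Set P) : signPatterns f ∅ A ⊆ {∅} := by
  rintro _ ⟨x, -, rfl⟩
  simp

lemma signPatterns_insert_subset [DecidableEq ι] (a : ι) (s : Finset ι) (A : Set P) :
    signPatterns f (insert a s) A ⊆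
      signPatterns f s (A ∩ {x | f a x < 0}) ∪
        insert a '' signPatterns f s (A ∩ {x | 0 < f a x}) := by
  rintro _ ⟨x, ⟨hxA, hx⟩, rfl⟩
  have hs : ∀ j ∈ s, f j x ≠ 0 := fun j hj => hx j (mem_insert_of_mem hj)
  rcases (hx a (mem_insert_self a s)).lt_or_gt with ha | ha
  · refine Or.inl ⟨x, ⟨⟨hxA, ha⟩, hs⟩, ?_⟩
    dsimp only
    rw [filter_insert, if_neg ha.not_gt]
  · refine Or.inr ⟨_, ⟨x, ⟨⟨hxA, ha⟩, hs⟩, rfl⟩, ?_⟩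
    dsimp only
    rw [filter_insert, if_pos ha]

/-- A cell met on both sides of the hyperplane `g = 0` crosses it: on the segment joining the two
witnesses no `f j` changes sign, and `g` vanishes somewhere. -/
lemma signPatterns_inter_subset [IsStrictOrderedRing 𝕜] (s : Finset ι) (A : AffineSubspace 𝕜 P)
    (g : P →ᵃ[𝕜] 𝕜) :
    signPatterns f s (A ∩ {x | g x < 0}) ∩ signPatterns f s (A ∩ {x | 0 < g x}) ⊆
      signPatterns f s (A ∩ {x | g x = 0}) := by
  rintro _ ⟨⟨x, ⟨⟨hxA, hgx⟩, hx⟩, rfl⟩, ⟨y, ⟨⟨hyA, hgy⟩, hy⟩, hxy⟩⟩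
  have hsame : ∀ j ∈ s, (0 < f j x ↔ 0 < f j y) := fun j hj => by
    simpa [hj] using (Finset.ext_iff.1 hxy j).symm
  change g x < 0 at hgx
  change 0 < g y at hgy
  obtain ⟨t, ht, hgt⟩ : ∃ t ∈ Set.Icc (0 : 𝕜) 1, AffineMap.lineMap (g x) (g y) t = 0 := by
    refine ⟨g x / (g x - g y), ⟨div_nonneg_of_nonpos hgx.le (by linarith), ?_⟩, ?_⟩
    · rw [div_le_one_of_neg (by linarith)]
      linarith
    · rw [AffineMap.lineMap_apply_ring']
      field_simp [show g x - g y ≠ 0 by linarith]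
      ring
  have hsign j (hj : j ∈ s) := lineMap_ne_zero_and_pos_iff (hx j hj) (hy j hj) (hsame j hj) ht
  refine ⟨AffineMap.lineMap x y t, ⟨⟨AffineMap.lineMap_mem t hxA hyA, ?_⟩, fun j hj => ?_⟩, ?_⟩
  · rw [Set.mem_ofPred_eq, AffineMap.apply_lineMap, hgt]
  · rw [AffineMap.apply_lineMap]
    exact (hsign j hj).1
  · refine filter_congr fun j hj => ?_
    rw [AffineMap.apply_lineMap]
    exact (hsign j hj).2

theorem ncard_signPatterns_le [IsStrictOrderedRing 𝕜] [FiniteDimensional 𝕜 V] (s : Finset ι)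
    (A : AffineSubspace 𝕜 P) :
    (signPatterns f s A).ncard ≤ (#s + 1) ^ finrank 𝕜 A.direction := by
  classical
  induction s using Finset.induction_on generalizing A with
  | empty => simpa using Set.ncard_le_ncard (signPatterns_empty_subset f A)
  | insert a s ha ih =>
    set neg := signPatterns f s (A ∩ {x | f a x < 0})
    set pos := signPatterns f s (A ∩ {x | 0 < f a x})
    have hfin := signPatterns_finite f s
    have hsplit : (signPatterns f (insert a s) A).ncard ≤ (neg ∪ pos).ncard + (neg ∩ pos).ncard :=
      calc _ ≤ (neg ∪ insert a '' pos).ncard :=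
            Set.ncard_le_ncard (signPatterns_insert_subset f a s A)
              ((hfin _).union ((hfin _).image _))
        _ ≤ neg.ncard + (insert a '' pos).ncard := Set.ncard_union_le _ _
        _ ≤ neg.ncard + pos.ncard := by grw [Set.ncard_image_le (hfin _)]
        _ = (neg ∪ pos).ncard + (neg ∩ pos).ncard :=
            (Set.ncard_union_add_ncard_inter _ _ (hfin _) (hfin _)).symm
    have hunion : (neg ∪ pos).ncard ≤ (#s + 1) ^ finrank 𝕜 A.direction :=
      (Set.ncard_le_ncard (Set.union_subset (signPatterns_mono f s Set.inter_subset_left)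
        (signPatterns_mono f s Set.inter_subset_left)) (hfin _)).trans (ih A)
    rw [card_insert_of_notMem ha]
    rcases (neg ∩ pos).eq_empty_or_nonempty with hempty | ⟨T, hT⟩
    · rw [hempty, Set.ncard_empty, add_zero] at hsplit
      exact (hsplit.trans hunion).trans (Nat.pow_le_pow_left (by omega) _)
    set H := A ⊓ (affineSpan 𝕜 {0}).comap (f a)
    have hcoe : (H : Set P) = (A : Set P) ∩ {x | f a x = 0} := by
      ext x
      exact and_congr Iff.rfl (by simp)
    have hinter : neg ∩ pos ⊆ signPatterns f s H := hcoe ▸ signPatterns_inter_subset f s A (f a)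
    obtain ⟨x, ⟨⟨hxA, hx⟩, -⟩, -⟩ := hT.1
    obtain ⟨z, ⟨hz, -⟩, -⟩ := hinter hT
    rw [hcoe] at hz
    have hdim : finrank 𝕜 H.direction < finrank 𝕜 A.direction :=
      finrank_direction_inf_comap_lt A (f a) hxA hx.ne hz.1 hz.2
    obtain ⟨e, he⟩ : ∃ e, finrank 𝕜 A.direction = e + 1 := Nat.exists_eq_add_one.2 (by omega)
    rw [he] at hunion ⊢
    calc _ ≤ (#s + 1) ^ (e + 1) + (#s + 1) ^ finrank 𝕜 H.direction :=
          hsplit.trans (add_le_add hunion ((Set.ncard_le_ncard hinter (hfin _)).trans (ih H)))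
      _ ≤ (#s + 1) ^ (e + 1) + (#s + 1) ^ e := by gcongr; omega; omega
      _ = (#s + 1) ^ e * (#s + 2) := by ring
      _ ≤ (#s + 2) ^ e * (#s + 2) := by gcongr; omega
      _ = (#s + 1 + 1) ^ (e + 1) := by ring

theorem ncard_signPatterns_univ_le [IsStrictOrderedRing 𝕜] [FiniteDimensional 𝕜 V]
    (s : Finset ι) : (signPatterns f s Set.univ).ncard ≤ (#s + 1) ^ finrank 𝕜 V := by
  have h := ncard_signPatterns_le f s (⊤ : AffineSubspace 𝕜 P)
  rwa [AffineSubspace.top_coe, AffineSubspace.direction_top, finrank_top] at h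

end SignPatterns

section DistancePermutations

variable {E : Type*} [NormedAddCommGroup E] [InnerProductSpace ℝ E]

noncomputable def sqDistDiff (a b : E) : E →ᵃ[ℝ] ℝ where
  toFun q := ‖q - b‖ ^ 2 - ‖q - a‖ ^ 2
  linear := 2 • innerₛₗ ℝ (a - b)
  map_vadd' q v := by
    simp only [vadd_eq_add, LinearMap.smul_apply, innerₛₗ_apply_apply, add_sub_assoc,
      norm_add_sq_real, inner_sub_right, real_inner_comm v, nsmul_eq_mul, Nat.cast_ofNat]
    ring

lemma sqDistDiff_pos_iff {a b q : E} : 0 < sqDistDiff a b q ↔ ‖q - a‖ < ‖q - b‖ := by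
  simp [sqDistDiff, sq_lt_sq₀ (norm_nonneg _) (norm_nonneg _)]

lemma sqDistDiff_eq_zero_iff {a b q : E} : sqDistDiff a b q = 0 ↔ ‖q - a‖ = ‖q - b‖ := by
  simp [sqDistDiff, sub_eq_zero, sq_eq_sq₀ (norm_nonneg _) (norm_nonneg _), eq_comm]

lemma Equiv.Perm.eq_of_lt_iff_lt {α : Type*} [LinearOrder α] [Finite α] {π ρ : Equiv.Perm α}
    (h : ∀ i j, π i < π j ↔ ρ i < ρ j) : π = ρ := by
  have hmono : StrictMono fun i => ρ (π.symm i) := fun i j hij => by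
    simpa [← h] using hij
  ext i
  simpa using (hmono.apply_eq (x := π i)).symm

/-- A distance permutation is recovered from which of each two sites is nearer to the query
point. -/
theorem ncard_distancePermutations_le {k : ℕ} (d : Fin k → E) :
    {π : Equiv.Perm (Fin k) | ∃ q, StrictMono fun i => ‖q - d (π i)‖}.ncard ≤
      (signPatterns (fun p : Fin k × Fin k => sqDistDiff (d p.1) (d p.2))
        (univ : Finset (Fin k)).offDiag Set.univ).ncard := by
  refine Set.ncard_le_ncard_of_injOn
    (fun π : Equiv.Perm (Fin k) => {p ∈ (univ : Finset (Fin k)).offDiag | π.symm p.1 < π.symm p.2})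
    ?_ ?_ (signPatterns_finite _ _ _)
  · rintro π ⟨q, hq⟩
    have hlt : ∀ i j, ‖q - d i‖ < ‖q - d j‖ ↔ π.symm i < π.symm j := fun i j => by
      simpa using hq.lt_iff_lt (a := π.symm i) (b := π.symm j)
    refine ⟨q, ⟨trivial, fun p hp h => (mem_offDiag.1 hp).2.2 ?_⟩,
      filter_congr fun p _ => by rw [sqDistDiff_pos_iff, hlt]⟩
    refine π.symm.injective (hq.injective ?_)
    simpa using (sqDistDiff_eq_zero_iff.1 h)
  · intro π _ ρ _ h
    refine Equiv.symm_bijective.injective (Equiv.Perm.eq_of_lt_iff_lt fun i j => ?_)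
    rcases eq_or_ne i j with rfl | hij
    · simp
    · simpa [hij] using Finset.ext_iff.1 h (i, j)

end DistancePermutations

/-- For any `k ≥ 2` sites `d₁, …, d_k` in `ℝⁿ`, the number of
distance permutations — permutations `π` of the sites realized by some query point
`q ∈ ℝⁿ` with strictly increasing Euclidean distances along `π` — is at most `k^(2n)`. -/
theorem distance_permutations_card_le
    (k n : ℕ) (hk : 2 ≤ k) (d : Fin k → EuclideanSpace ℝ (Fin n)) :
    Nat.card {π : Equiv.Perm (Fin k) //
        ∃ q : EuclideanSpace ℝ (Fin n),
          StrictMono (fun i : Fin k => ‖q - d (π i)‖)} ≤ k ^ (2 * n) := by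
  have hpairs : k * k - k + 1 ≤ k ^ 2 := by
    have : k ≤ k * k := Nat.le_mul_self k
    rw [sq]
    omega
  calc Nat.card _
      = {π : Equiv.Perm (Fin k) | ∃ q, StrictMono fun i => ‖q - d (π i)‖}.ncard :=
        Nat.card_coe_set_eq _
    _ ≤ _ := ncard_distancePermutations_le d
    _ ≤ (#(univ : Finset (Fin k)).offDiag + 1) ^ finrank ℝ (EuclideanSpace ℝ (Fin n)) :=
        ncard_signPatterns_univ_le _ _
    _ ≤ (k ^ 2) ^ n := by simpa using Nat.pow_le_pow_left hpairs n
    _ = k ^ (2 * n) := (pow_mul k 2 n).symm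
end

section
/- Let E ∈ ℝ^{m×n} be a matrix whose rows are token embeddings, and let E′ ∈ ℝ^{m×(n+1)} be E augmented with a column of all ones. Then the following are equivalent: (i) for every permutation π of {1, …, m} there exists φ ∈ ℝⁿ such that (Eφ)_{π(1)} > (Eφ)_{π(2)} > ⋯ > (Eφ)_{π(m)}; (ii) rank(E′) = m. -/
/-- The matrix `E ∈ ℝ^{m×n}` augmented with a column of all ones, `E′ ∈ ℝ^{m×(n+1)}`. -/
def augmentOnes {m n : ℕ} (E : Matrix (Fin m) (Fin n) ℝ) :
    Matrix (Fin m) (Fin (n + 1)) ℝ :=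
  fun i j => if hj : (j : ℕ) < n then E i ⟨j, hj⟩ else 1

open Matrix Finset

lemma augment_castSucc {m n : ℕ} (E : Matrix (Fin m) (Fin n) ℝ) (i : Fin m) (j : Fin n) :
    augmentOnes E i j.castSucc = E i j := by
  have hj : ((j.castSucc : Fin (n+1)) : ℕ) < n := j.isLt
  simp only [augmentOnes, dif_pos hj]
  congr 1

lemma augment_last {m n : ℕ} (E : Matrix (Fin m) (Fin n) ℝ) (i : Fin m) :
    augmentOnes E i (Fin.last n) = 1 := by
  simp [augmentOnes]

lemma augment_mulVec {m n : ℕ} (E : Matrix (Fin m) (Fin n) ℝ) (ψ : Fin (n + 1) → ℝ)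
    (i : Fin m) :
    (augmentOnes E).mulVec ψ i
      = E.mulVec (fun j => ψ j.castSucc) i + ψ (Fin.last n) := by
  simp only [Matrix.mulVec, dotProduct, Fin.sum_univ_castSucc]
  rw [augment_last]
  congr 1
  · exact Finset.sum_congr rfl fun j _ => by rw [augment_castSucc]
  · ring

lemma augment_vecMul_last {m n : ℕ} (E : Matrix (Fin m) (Fin n) ℝ) (w : Fin m → ℝ)
    (h : Matrix.vecMul w (augmentOnes E) = 0) : ∑ i, w i = 0 := by
  have := congrFun h (Fin.last n)
  simp only [Matrix.vecMul, dotProduct, Pi.zero_apply] at this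
  rw [← this]
  exact Finset.sum_congr rfl fun i _ => by rw [augment_last]; ring

lemma augment_vecMul_E {m n : ℕ} (E : Matrix (Fin m) (Fin n) ℝ) (w : Fin m → ℝ)
    (h : Matrix.vecMul w (augmentOnes E) = 0) : Matrix.vecMul w E = 0 := by
  funext j
  have := congrFun h j.castSucc
  simp only [Matrix.vecMul, dotProduct, Pi.zero_apply] at this ⊢
  rw [← this]
  exact Finset.sum_congr rfl fun i _ => by rw [augment_castSucc]

lemma rank_eq_surjective {m k : ℕ} (A : Matrix (Fin m) (Fin k) ℝ) (h : A.rank = m) :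
    Function.Surjective A.mulVec := by
  have hr : LinearMap.range A.mulVecLin = ⊤ := by
    apply Submodule.eq_top_of_finrank_eq
    rw [Matrix.rank] at h
    simp [h]
  intro y
  obtain ⟨x, hx⟩ := LinearMap.range_eq_top.mp hr y
  exact ⟨x, hx⟩

lemma exists_vecMul_zero_of_rank_ne {m k : ℕ} (A : Matrix (Fin m) (Fin k) ℝ)
    (h : A.rank ≠ m) : ∃ w : Fin m → ℝ, w ≠ 0 ∧ Matrix.vecMul w A = 0 := by
  have ht : Aᵀ.rank ≠ m := by rwa [Matrix.rank_transpose]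
  have hrn := LinearMap.finrank_range_add_finrank_ker Aᵀ.mulVecLin
  have hker : LinearMap.ker Aᵀ.mulVecLin ≠ ⊥ := by
    intro hk
    apply ht
    rw [Matrix.rank]
    have h0 : Module.finrank ℝ (LinearMap.ker Aᵀ.mulVecLin) = 0 := by rw [hk]; simp
    rw [h0] at hrn
    simpa using hrn
  obtain ⟨w, hw, hw0⟩ := Submodule.exists_mem_ne_zero_of_ne_bot hker
  refine ⟨w, hw0, ?_⟩
  rw [← Matrix.mulVec_transpose]
  exact hw

lemma key_pos {m : ℕ} (v y : Fin m → ℝ) (hv : Antitone v) (hsum : ∑ i, v i = 0)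
    (hv0 : v ≠ 0) (hy : StrictAnti y) : 0 < ∑ i, v i * y i := by
  have hex : ∃ i, 0 < v i := by
    by_contra h
    push_neg at h
    apply hv0
    funext i
    have := (Finset.sum_eq_zero_iff_of_nonpos (fun i _ => h i)).mp hsum i (mem_univ i)
    simpa using this
  classical
  obtain ⟨i0, hi0⟩ := hex
  set S : Finset (Fin m) := univ.filter (fun i => 0 < v i) with hS
  have hSne : S.Nonempty := ⟨i0, by simp [hS, hi0]⟩
  set k := S.max' hSne with hk
  have hkpos : 0 < v k := by have := S.max'_mem hSne; simpa [hS] using this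
  have hk1 : (k : ℕ) + 1 < m := by
    by_contra h
    push_neg at h
    have hall : ∀ i : Fin m, i ≤ k := fun i => by
      show (i : ℕ) ≤ (k : ℕ); omega
    have hpos : (0 : ℝ) < ∑ i, v i := by
      apply Finset.sum_pos
      · exact fun i _ => lt_of_lt_of_le hkpos (hv (hall i))
      · exact ⟨k, mem_univ k⟩
    rw [hsum] at hpos; exact lt_irrefl _ hpos
  set k1 : Fin m := ⟨(k : ℕ) + 1, hk1⟩ with hk1def
  set t := y k1 with ht
  have hmain : ∑ i, v i * y i = ∑ i, v i * (y i - t) := by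
    simp only [mul_sub, Finset.sum_sub_distrib, ← Finset.sum_mul, hsum]
    ring
  rw [hmain]
  apply Finset.sum_pos'
  · intro i _
    rcases le_or_gt i k with hik | hik
    · have h1 : 0 < v i := lt_of_lt_of_le hkpos (hv hik)
      have h2 : y i > t := by
        apply hy
        show (i : ℕ) < (k : ℕ) + 1
        exact Nat.lt_succ_of_le hik
      nlinarith
    · have h1 : v i ≤ 0 := by
        by_contra h
        push_neg at h
        have : i ∈ S := by simp [hS, h]
        exact absurd (S.le_max' i this) (not_le.mpr hik)
      have h2 : y i ≤ t := by
        apply hy.antitone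
        show (k : ℕ) + 1 ≤ (i : ℕ)
        exact hik
      nlinarith
  · refine ⟨k, mem_univ k, ?_⟩
    have h2 : y k > t := hy (show (k : ℕ) < (k : ℕ) + 1 by omega)
    nlinarith

/-- Arbitrary permutations over tokens: an infinite-capacity ARR with
token-embedding matrix `E` can realize every permutation `π` of the `m` tokens by some
hidden vector `φ` whose logits `Eφ` are strictly decreasing along `π` iff the augmented
matrix `E′` has rank `m`. -/
theorem arbitrary_token_permutations_iff_rank
    (m n : ℕ) (E : Matrix (Fin m) (Fin n) ℝ) :
    (∀ π : Equiv.Perm (Fin m), ∃ φ : Fin n → ℝ,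
        StrictAnti (fun i : Fin m => E.mulVec φ (π i))) ↔
    (augmentOnes E).rank = m := by
  constructor
  · -- (i) → (ii), by contraposition
    intro hperm
    by_contra hrank
    obtain ⟨w, hw0, hwE⟩ := exists_vecMul_zero_of_rank_ne (augmentOnes E) hrank
    have hsum : ∑ i, w i = 0 := augment_vecMul_last E w hwE
    have hE : Matrix.vecMul w E = 0 := augment_vecMul_E E w hwE
    -- sort indices so that w is antitone along π
    set π : Equiv.Perm (Fin m) := Tuple.sort (fun i => -w i) with hπ
    have hmono : Monotone ((fun i => -w i) ∘ π) := Tuple.monotone_sort (fun i => -w i)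
    have hanti : Antitone (fun i => w (π i)) := by
      intro a b hab
      have := hmono hab
      simp only [Function.comp_apply] at this
      linarith
    obtain ⟨φ, hφ⟩ := hperm π
    set x := E.mulVec φ with hx
    have hdot : ∑ i, w i * x i = 0 := by
      have : dotProduct w x = Matrix.vecMul w E ⬝ᵥ φ := Matrix.dotProduct_mulVec w E φ
      rw [hE] at this
      simpa [dotProduct] using this
    have hvy : 0 < ∑ i, w (π i) * x (π i) := by
      apply key_pos (fun i => w (π i)) (fun i => x (π i)) hanti
      · rw [Equiv.sum_comp π w]; exact hsum
      · intro h0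
        apply hw0
        funext i
        have := congrFun h0 (π.symm i)
        simpa using this
      · exact hφ
    have : ∑ i, w (π i) * x (π i) = ∑ i, w i * x i :=
      Equiv.sum_comp π (fun i => w i * x i)
    rw [this, hdot] at hvy
    exact lt_irrefl _ hvy
  · -- (ii) → (i)
    intro hrank π
    have hsurj := rank_eq_surjective (augmentOnes E) hrank
    obtain ⟨ψ, hψ⟩ := hsurj (fun i => -((π.symm i : ℕ) : ℝ))
    refine ⟨fun j => ψ j.castSucc, ?_⟩
    intro a b hab
    have ha := augment_mulVec E ψ (π a)
    have hb := augment_mulVec E ψ (π b)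
    rw [congrFun hψ (π a)] at ha
    rw [congrFun hψ (π b)] at hb
    simp only [Equiv.symm_apply_apply] at ha hb
    have : E.mulVec (fun j => ψ j.castSucc) (π a) = -(a : ℝ) - ψ (Fin.last n) := by
      linarith
    have hb' : E.mulVec (fun j => ψ j.castSucc) (π b) = -(b : ℝ) - ψ (Fin.last n) := by
      linarith
    simp only [this, hb']
    have : (a : ℝ) < (b : ℝ) := by exact_mod_cast hab
    linarith
end
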